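/- arXiv:2105.09731 — 3 statements merged into one kernel-verified Lean document; each statement's English description precedes it below -/
import Mathlib

section
/- Let k be a field and A = k⟨X⟩ the free associative algebra on a set X, graded by total degree. If a₁, …, aₙ are nonzero homogeneous elements with |a₁| ≤ … ≤ |aₙ| and there exist homogeneous elements b₁, …, bₙ with ∑ aᵢbᵢ = 0 and not all bᵢ = 0, then some aᵢ is a right A-linear combination of the aⱼ with j < i. -/
/-!
Only the homogeneous component of degree `d = |a i₀| + |b i₀|` of the relation matters, and
there we may drop the terms with `b i = 0`. Let `m` be the largest remaining index. Since the
degrees of the `a i` are nondecreasing while `|a i| + |b i| = d`, the element `b m` has the least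
degree `N` among the remaining `b i`. Pick a word `u` of length `N` with coefficient `λ ≠ 0` in
`b m`. Cohn's right transduction by `u` (send `w'u` to `w'`, kill the words not ending in `u`)
commutes with left multiplication on elements all of whose words have length at least `N`, and it
sends `b m` to `λ`. Applied to the relation it gives `λ a m + ∑ a i b'ᵢ = 0` with `i < m`.
-/

open MonoidAlgebra

namespace MonoidAlgebra

variable (k : Type*) {M ι : Type*}

/-- The multiplicative analogue of `AddMonoidAlgebra.gradeBy`. -/
noncomputable abbrev gradeBy [Semiring k] (f : M → ι) (i : ι) :
    Submodule k (MonoidAlgebra k M) :=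
  supported k k (f ⁻¹' {i})

variable {k}

theorem single_mem_gradeBy [Semiring k] (f : M → ι) (m : M) (r : k) :
    single m r ∈ gradeBy k f (f m) :=
  fun _ hx => congrArg f (Finset.mem_singleton.1 (Finsupp.support_single_subset hx))

theorem gradeBy_mul_le [CommSemiring k] [Monoid M] [Add ι] {f : M → ι}
    (hf : ∀ x y, f (x * y) = f x + f y) (i j : ι) :
    gradeBy k f i * gradeBy k f j ≤ gradeBy k f (i + j) := by
  classical
  refine Submodule.mul_le.2 fun x hx y hy => ?_
  refine (Finset.coe_subset.2 (support_coeff_mul_subset x y)).trans ?_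
  rw [Finset.coe_mul]
  rintro _ ⟨m, hm, n, hn, rfl⟩
  exact (hf m n).trans (congrArg₂ (· + ·) (hx hm) (hy hn))

theorem sum_filter_eq_zero_of_mem_gradeBy [Semiring k] {κ : Type*} [DecidableEq ι] {f : M → ι}
    {s : Finset κ} {x : κ → MonoidAlgebra k M} {deg : κ → ι}
    (hx : ∀ j ∈ s, x j ∈ gradeBy k f (deg j))
    (h : ∑ j ∈ s, x j = 0) (i : ι) : ∑ j ∈ s with deg j = i, x j = 0 := by
  ext m
  have hcoeff : ∀ j ∈ s, (if deg j = i then (x j).coeff m else 0) =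
      if f m = i then (x j).coeff m else 0 := by
    intro j hj
    by_cases hm : (x j).coeff m = 0
    · rw [hm, ite_self, ite_self]
    · rw [hx j hj (Finsupp.mem_support_iff.2 hm)]
  rw [coeff_sum, Finset.sum_apply', Finset.sum_filter, Finset.sum_congr rfl hcoeff,
    Finset.sum_ite_irrel, ← Finset.sum_apply', ← coeff_sum, h]
  simp

end MonoidAlgebra

namespace FreeMonoid

variable {X : Type*}

theorem isSuffix_mul_iff {u v : FreeMonoid X} (w : FreeMonoid X) (h : u.length ≤ v.length) :
    u.toList <:+ (w * v).toList ↔ u.toList <:+ v.toList := by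
  rw [toList_mul]
  exact ⟨fun hs => List.suffix_of_suffix_length_le hs (List.suffix_append _ _) h,
    fun hs => hs.trans (List.suffix_append _ _)⟩

variable (k : Type*) [CommSemiring k]

open Classical in
noncomputable def stripSuffix (u w : FreeMonoid X) : MonoidAlgebra k (FreeMonoid X) :=
  if u.toList <:+ w.toList then single (ofList (w.toList.take (w.length - u.length))) 1 else 0

theorem stripSuffix_mul {u v : FreeMonoid X} (w : FreeMonoid X) (h : u.length ≤ v.length) :
    stripSuffix k u (w * v) = single w 1 * stripSuffix k u v := by
  unfold stripSuffix
  split_ifs with hwv hv hv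
  · have hw : w.length = w.toList.length := rfl
    rw [single_mul_single, mul_one, toList_mul, length_mul, Nat.add_sub_assoc h, hw,
      List.take_length_add_append, ofList_append, ofList_toList]
  · exact absurd ((isSuffix_mul_iff w h).1 hwv) hv
  · exact absurd ((isSuffix_mul_iff w h).2 hv) hwv
  · rw [mul_zero]

open Classical in
theorem stripSuffix_of_length_eq {u v : FreeMonoid X} (h : v.length = u.length) :
    stripSuffix k u v = if v = u then 1 else 0 := by
  unfold stripSuffix
  split_ifs with hs hvu hvu
  · rw [hvu, Nat.sub_self, List.take_zero]
    rfl
  · exact absurd (toList.injective (hs.eq_of_length h.symm)).symm hvu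
  · exact absurd (hvu ▸ List.suffix_refl _) hs
  · rfl

noncomputable def rightTransduction (u : FreeMonoid X) :
    MonoidAlgebra k (FreeMonoid X) →ₗ[k] MonoidAlgebra k (FreeMonoid X) :=
  (MonoidAlgebra.basis (FreeMonoid X) k).constr k (stripSuffix k u)

theorem rightTransduction_single (u w : FreeMonoid X) (r : k) :
    rightTransduction k u (single w r) = r • stripSuffix k u w := by
  rw [← mul_one r, ← smul_single', map_smul, rightTransduction, ← basis_apply,
    Module.Basis.constr_basis, mul_one]

theorem rightTransduction_mul {u : FreeMonoid X} (p : MonoidAlgebra k (FreeMonoid X))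
    {q : MonoidAlgebra k (FreeMonoid X)}
    (hq : q ∈ supported k k {v : FreeMonoid X | u.length ≤ v.length}) :
    rightTransduction k u (p * q) = p * rightTransduction k u q := by
  rw [supported_eq_span_single] at hq
  induction hq using Submodule.span_induction with
  | mem q hq =>
    obtain ⟨v, hv, rfl⟩ := hq
    induction p using MonoidAlgebra.induction_linear with
    | zero => rw [zero_mul, map_zero, zero_mul]
    | add p p' hp hp' => rw [add_mul, map_add, hp, hp', add_mul]
    | single w r =>
      rw [single_mul_single, mul_one, rightTransduction_single, rightTransduction_single,
        one_smul, stripSuffix_mul k w hv, ← smul_mul_assoc, smul_single', mul_one]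
  | zero => rw [mul_zero, map_zero, mul_zero]
  | add q q' _ _ hq hq' => rw [mul_add, map_add, hq, hq', map_add, mul_add]
  | smul c q _ hq => rw [mul_smul_comm, map_smul, hq, map_smul, mul_smul_comm]

theorem rightTransduction_of_mem_gradeBy {u : FreeMonoid X} {q : MonoidAlgebra k (FreeMonoid X)}
    (hq : q ∈ gradeBy k length u.length) :
    rightTransduction k u q = q.coeff u • 1 := by
  classical
  rw [gradeBy, supported_eq_span_single] at hq
  induction hq using Submodule.span_induction with
  | mem q hq =>
    obtain ⟨v, hv, rfl⟩ := hq
    rw [rightTransduction_single, one_smul, stripSuffix_of_length_eq k hv, coeff_single,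
      Finsupp.single_apply]
    rw [ite_smul, one_smul, zero_smul]
  | zero => rw [map_zero, coeff_zero, Finsupp.zero_apply, zero_smul]
  | add q q' _ _ hq hq' => rw [map_add, hq, hq', coeff_add, Finsupp.add_apply, add_smul]
  | smul c q _ hq => rw [map_smul, hq, coeff_smul, Finsupp.smul_apply, smul_smul, smul_eq_mul]

variable {k : Type*} [Field k]

theorem exists_eq_sum_erase_mul_of_sum_mul_eq_zero {ι : Type*} [DecidableEq ι] {s : Finset ι}
    {a b : ι → MonoidAlgebra k (FreeMonoid X)} {m : ι} (hm : m ∈ s) {N : ℕ}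
    (hbm : b m ∈ gradeBy k length N) (hbm₀ : b m ≠ 0)
    (hb : ∀ i ∈ s, b i ∈ supported k k {w : FreeMonoid X | N ≤ w.length})
    (h : ∑ i ∈ s, a i * b i = 0) :
    ∃ c : ι → MonoidAlgebra k (FreeMonoid X), a m = ∑ i ∈ s.erase m, a i * c i := by
  obtain ⟨u, hu⟩ : ∃ u, (b m).coeff u ≠ 0 := by
    by_contra! h0
    exact hbm₀ (coeff_eq_zero.1 (Finsupp.ext h0))
  obtain rfl : u.length = N := hbm (Finsupp.mem_support_iff.2 hu)
  set φ := rightTransduction k u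
  have hrel : (b m).coeff u • a m + ∑ i ∈ s.erase m, a i * φ (b i) = 0 := by
    have h' := congrArg φ h
    rwa [map_sum, map_zero,
      Finset.sum_congr rfl fun i hi => rightTransduction_mul k (a i) (hb i hi),
      ← Finset.add_sum_erase s _ hm, rightTransduction_of_mem_gradeBy k hbm, mul_smul_comm,
      mul_one] at h'
  refine ⟨fun i => -((b m).coeff u)⁻¹ • φ (b i), ?_⟩
  simp_rw [mul_smul_comm, ← Finset.smul_sum, eq_neg_of_add_eq_zero_right hrel, smul_neg, neg_smul,
    neg_neg, smul_smul, inv_mul_cancel₀ hu, one_smul]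

theorem exists_eq_sum_lt_mul_of_sum_mul_eq_zero {ι : Type*} [Fintype ι] [LinearOrder ι]
    {a b : ι → MonoidAlgebra k (FreeMonoid X)} {da db : ι → ℕ}
    (ha : ∀ i, a i ∈ gradeBy k length (da i)) (hmono : Monotone da)
    (hb : ∀ i, b i ∈ gradeBy k length (db i)) (h : ∑ i, a i * b i = 0)
    (hb₀ : ∃ i, b i ≠ 0) :
    ∃ i, ∃ c : ι → MonoidAlgebra k (FreeMonoid X),
      a i = ∑ j ∈ Finset.univ.filter (fun j => j < i), a j * c j := by
  classical
  obtain ⟨i₀, hi₀⟩ := hb₀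
  set d := da i₀ + db i₀
  set S := (Finset.univ.filter fun i => da i + db i = d).filter fun i => b i ≠ 0
  have hS : ∑ i ∈ S, a i * b i = 0 := by
    rw [Finset.sum_filter_of_ne fun i _ hi => right_ne_zero_of_mul hi]
    have hab : ∀ i ∈ Finset.univ, a i * b i ∈ gradeBy k length (da i + db i) := fun i _ =>
      gradeBy_mul_le length_mul (da i) (db i) (Submodule.mul_mem_mul (ha i) (hb i))
    exact sum_filter_eq_zero_of_mem_gradeBy hab h d
  have hSne : S.Nonempty := ⟨i₀, by simp [S, d, hi₀]⟩
  obtain ⟨m, hmS, hmax⟩ : ∃ m ∈ S, ∀ i ∈ S, i ≤ m :=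
    ⟨S.max' hSne, S.max'_mem hSne, fun i hi => S.le_max' i hi⟩
  have hmin : ∀ i ∈ S, db m ≤ db i := fun i hi => by
    have := hmono (hmax i hi)
    simp only [S, Finset.mem_filter] at hi hmS
    omega
  obtain ⟨c, hc⟩ := exists_eq_sum_erase_mul_of_sum_mul_eq_zero hmS (hb m)
    (Finset.mem_filter.1 hmS).2 (fun i hi w hw => (hmin i hi).trans_eq (hb i hw).symm) hS
  have hlt : S.erase m ⊆ Finset.univ.filter (fun j => j < m) := fun j hj =>
    Finset.mem_filter.2 ⟨Finset.mem_univ j,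
      (hmax j (Finset.mem_of_mem_erase hj)).lt_of_ne (Finset.ne_of_mem_erase hj)⟩
  refine ⟨m, fun j => if j ∈ S.erase m then c j else 0, ?_⟩
  simp_rw [mul_ite, mul_zero, Finset.sum_ite_mem, Finset.inter_eq_right.2 hlt]
  exact hc

end FreeMonoid

namespace FreeAlgebra

variable {k X : Type*} [CommSemiring k]

theorem equivMonoidAlgebraFreeMonoid_mem_gradeBy {d : ℕ} {x : FreeAlgebra k X}
    (hx : x ∈ Submodule.span k (Set.range (ι k)) ^ d) :
    equivMonoidAlgebraFreeMonoid x ∈ gradeBy k FreeMonoid.length d := by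
  suffices h : (Submodule.span k (Set.range (ι k)) ^ d).map
      (equivMonoidAlgebraFreeMonoid (R := k) (X := X)).toAlgHom.toLinearMap ≤
      gradeBy k FreeMonoid.length d by exact h (Submodule.mem_map_of_mem hx)
  clear hx
  rw [Submodule.map_pow]
  induction d with
  | zero =>
    refine Submodule.one_le.2 fun w hw => ?_
    rw [Finset.mem_one.1 (support_coeff_one_subset hw)]
    exact FreeMonoid.length_one
  | succ d ih =>
    rw [pow_succ]
    refine (mul_le_mul' ih ?_).trans (gradeBy_mul_le FreeMonoid.length_mul d 1)
    rw [Submodule.map_span_le]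
    rintro _ ⟨y, rfl⟩
    have hy : equivMonoidAlgebraFreeMonoid (ι k y) = single (FreeMonoid.of y) (1 : k) := by
      simp [equivMonoidAlgebraFreeMonoid]
    rw [AlgHom.toLinearMap_apply, AlgEquiv.coe_toAlgHom, hy, ← FreeMonoid.length_of y]
    exact single_mem_gradeBy _ _ _

end FreeAlgebra

theorem stmt0_general (k : Type*) [Field k] (X : Type*) (n : ℕ)
    (M : Submodule k (FreeAlgebra k X))
    (hM : M = Submodule.span k (Set.range (FreeAlgebra.ι k (X := X))))
    (a b : Fin n → FreeAlgebra k X) (da db : Fin n → ℕ)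
    (ha : ∀ i, a i ∈ M ^ (da i))
    (hmono : Monotone da)
    (hb : ∀ i, b i ∈ M ^ (db i))
    (hsum : ∑ i, a i * b i = 0)
    (hbne : ∃ i, b i ≠ 0) :
    ∃ i : Fin n, ∃ c : Fin n → FreeAlgebra k X,
      a i = ∑ j ∈ Finset.univ.filter (fun j => j < i), a j * c j := by
  subst hM
  let e := FreeAlgebra.equivMonoidAlgebraFreeMonoid (R := k) (X := X)
  obtain ⟨i, c, hc⟩ := FreeMonoid.exists_eq_sum_lt_mul_of_sum_mul_eq_zero
    (a := fun i => e (a i)) (b := fun i => e (b i))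
    (fun i => FreeAlgebra.equivMonoidAlgebraFreeMonoid_mem_gradeBy (ha i)) hmono
    (fun i => FreeAlgebra.equivMonoidAlgebraFreeMonoid_mem_gradeBy (hb i))
    (by simp_rw [← map_mul, ← map_sum, hsum, map_zero])
    (hbne.imp fun i hi => (map_ne_zero_iff e e.injective).2 hi)
  refine ⟨i, fun j => e.symm (c j), e.injective ?_⟩
  simp only [hc, map_sum, map_mul, AlgEquiv.apply_symm_apply]

/-- In the free associative algebra `A = k⟨X⟩`, graded by total degree
(`M ^ d` is the degree-`d` homogeneous component, where `M` is the span of the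
generators), if nonzero homogeneous elements `a₁, …, aₙ` with nondecreasing degrees
satisfy `∑ aᵢ bᵢ = 0` for homogeneous `bᵢ`, not all zero, then some `aᵢ` is a right
`A`-linear combination of the `aⱼ` with `j < i`. -/
theorem stmt0 (k : Type*) [Field k] (X : Type*) (n : ℕ)
    (M : Submodule k (FreeAlgebra k X))
    (hM : M = Submodule.span k (Set.range (FreeAlgebra.ι k (X := X))))
    (a b : Fin n → FreeAlgebra k X) (da db : Fin n → ℕ)
    (ha : ∀ i, a i ∈ M ^ (da i)) (hane : ∀ i, a i ≠ 0)
    (hmono : Monotone da)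
    (hb : ∀ i, b i ∈ M ^ (db i))
    (hsum : ∑ i, a i * b i = 0)
    (hbne : ∃ i, b i ≠ 0) :
    ∃ i : Fin n, ∃ c : Fin n → FreeAlgebra k X,
      a i = ∑ j ∈ Finset.univ.filter (fun j => j < i), a j * c j :=
  stmt0_general k X n M hM a b da db ha hmono hb hsum hbne
end

section
/- Let L be a free Lie algebra over a field k of characteristic 0, freely generated by a set F, graded so that each element of F is homogeneous of positive degree. Then any set X of homogeneous elements of L whose images form a basis of the abelianization L/[L,L] freely generates L. -/
/-!
Let `φ : FreeLieAlgebra k X → L` be the canonical map. Since `L` is positively graded and the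
homogeneous elements of `X` span `L` modulo `[L, L]`, induction on the degree shows that `X`
generates `L`, so `φ` is onto, and since `L` is free on `F`, `φ` has a Lie algebra section `ψ`.
As the images of `X` in `L/[L, L]` are linearly independent, the endomorphism `ψ ∘ φ` of the
free Lie algebra on `X` is the identity modulo its derived algebra. Hence `ψ ∘ φ - id` raises
the lower central series filtration by one, so `ker (ψ ∘ φ)` lies in every term of the series.
Free Lie algebras are residually nilpotent: the Lie map `y ↦ X ⊗ y` into `k[X] ⊗ FreeLieAlgebra k X`
sends the `n`-th term into `X ^ n • _`, and it is injective because setting `X = 1` recovers the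
identity. So `ψ ∘ φ`, and with it `φ`, is injective.
-/

noncomputable section

open Polynomial LieModule
open scoped TensorProduct

namespace LieModule

variable {R L M : Type*} [CommRing R] [LieRing L] [LieAlgebra R L] [AddCommGroup M] [Module R M]
  [LieRingModule L M]

theorem lie_mem_lowerCentralSeries_succ (x : L) {m : M} {n : ℕ}
    (hm : m ∈ lowerCentralSeries R L M n) : ⁅x, m⁆ ∈ lowerCentralSeries R L M (n + 1) := by
  rw [lowerCentralSeries_succ]
  exact LieSubmodule.lie_mem_lie (LieSubmodule.mem_top x) hm

end LieModule

namespace LieAlgebra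

variable {R L : Type*} [CommRing R] [LieRing L] [LieAlgebra R L]

theorem coe_lowerCentralSeries_one : (lowerCentralSeries R L L 1).toSubmodule =
    Submodule.span R {z | ∃ a b : L, ⁅a, b⁆ = z} := by
  rw [lowerCentralSeries_succ, lowerCentralSeries_zero,
    LieSubmodule.lieIdeal_oper_eq_linear_span']
  simp

theorem lie_mem_lowerCentralSeries_add_two {a b : L} {n : ℕ}
    (ha : a ∈ lowerCentralSeries R L L 1) (hb : b ∈ lowerCentralSeries R L L n) :
    ⁅a, b⁆ ∈ lowerCentralSeries R L L (n + 2) := by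
  rw [← LieSubmodule.mem_toSubmodule, coe_lowerCentralSeries_one] at ha
  induction ha using Submodule.span_induction with
  | mem z hz =>
    obtain ⟨c, e, rfl⟩ := hz
    rw [lie_lie]
    exact sub_mem (lie_mem_lowerCentralSeries_succ c (lie_mem_lowerCentralSeries_succ e hb))
      (lie_mem_lowerCentralSeries_succ e (lie_mem_lowerCentralSeries_succ c hb))
  | zero => simp
  | add x y _ _ hx hy => rw [add_lie]; exact add_mem hx hy
  | smul r x _ hx => rw [smul_lie]; exact SMulMemClass.smul_mem r hx

theorem sub_mem_lowerCentralSeries_succ (θ : L →ₗ⁅R⁆ L)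
    (hθ : ∀ x, θ x - x ∈ lowerCentralSeries R L L 1) {n : ℕ} {x : L}
    (hx : x ∈ lowerCentralSeries R L L n) : θ x - x ∈ lowerCentralSeries R L L (n + 1) := by
  induction n generalizing x with
  | zero => exact hθ x
  | succ n ih =>
    rw [← LieSubmodule.mem_toSubmodule, lowerCentralSeries_succ,
      LieSubmodule.lieIdeal_oper_eq_linear_span'] at hx
    induction hx using Submodule.span_induction with
    | mem z hz =>
      obtain ⟨a, -, b, hb, rfl⟩ := hz
      have hθb : θ b ∈ lowerCentralSeries R L L n :=
        LieIdeal.map_lowerCentralSeries_le n (LieIdeal.mem_map hb)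
      have hsplit : θ ⁅a, b⁆ - ⁅a, b⁆ = ⁅θ a - a, θ b⁆ + ⁅a, θ b - b⁆ := by
        rw [LieHom.map_lie, sub_lie, lie_sub]; abel
      rw [hsplit]
      exact add_mem (lie_mem_lowerCentralSeries_add_two (hθ a) hθb)
        (lie_mem_lowerCentralSeries_succ a (ih hb))
    | zero => simp
    | add x y _ _ hx hy => rw [map_add, add_sub_add_comm]; exact add_mem hx hy
    | smul r x _ hx => rw [map_smul, ← smul_sub]; exact SMulMemClass.smul_mem r hx

theorem injective_of_sub_mem_lowerCentralSeries_one
    (hL : ∀ x : L, (∀ n, x ∈ lowerCentralSeries R L L n) → x = 0) (θ : L →ₗ⁅R⁆ L)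
    (hθ : ∀ x, θ x - x ∈ lowerCentralSeries R L L 1) : Function.Injective θ := by
  refine (injective_iff_map_eq_zero θ).2 fun x hx => hL x fun n => ?_
  induction n with
  | zero => exact LieSubmodule.mem_top x
  | succ n ih => simpa [hx] using sub_mem_lowerCentralSeries_succ θ hθ ih

end LieAlgebra

namespace LieAlgebra.ExtendScalars

variable {R : Type*} [CommRing R] {L : Type*} [LieRing L] [LieAlgebra R L]

variable (R L) in
def lid : R ⊗[R] L →ₗ⁅R⁆ L :=
  { (TensorProduct.lid R L).toLinearMap with
    map_lie' := by
      intro x y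
      induction x using TensorProduct.induction_on with
      | zero => simp
      | tmul r a =>
        induction y using TensorProduct.induction_on with
        | zero => simp
        | tmul s b => simp [bracket_tmul, mul_smul, smul_lie, lie_smul, smul_comm r s]
        | add y₁ y₂ h₁ h₂ => simp_all [lie_add]
      | add x₁ x₂ h₁ h₂ => simp_all [add_lie] }

@[simp] theorem lid_tmul (r : R) (a : L) : lid R L (r ⊗ₜ a) = r • a := rfl

variable (R L) in
def xPowIdeal (n : ℕ) : LieIdeal R (R[X] ⊗[R] L) where
  toSubmodule := LinearMap.range (DistribSMul.toLinearMap R (R[X] ⊗[R] L) (X ^ n : R[X]))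
  lie_mem := by
    rintro x _ ⟨q, rfl⟩
    exact ⟨⁅x, q⁆, (lie_smul (X ^ n : R[X]) x q).symm⟩

theorem mem_xPowIdeal {n : ℕ} {p : R[X] ⊗[R] L} :
    p ∈ xPowIdeal R L n ↔ ∃ q, (X ^ n : R[X]) • q = p := Iff.rfl

theorem lie_mem_xPowIdeal {i j : ℕ} {p q : R[X] ⊗[R] L} (hp : p ∈ xPowIdeal R L i)
    (hq : q ∈ xPowIdeal R L j) : ⁅p, q⁆ ∈ xPowIdeal R L (i + j) := by
  obtain ⟨p, rfl⟩ := mem_xPowIdeal.1 hp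
  obtain ⟨q, rfl⟩ := mem_xPowIdeal.1 hq
  refine mem_xPowIdeal.2 ⟨⁅p, q⁆, ?_⟩
  rw [smul_lie (L := R[X] ⊗[R] L) (M := R[X] ⊗[R] L),
    lie_smul (L := R[X] ⊗[R] L) (M := R[X] ⊗[R] L), smul_smul, pow_add, mul_comm]

theorem eq_zero_of_forall_mem_xPowIdeal {p : R[X] ⊗[R] L} (hp : ∀ n, p ∈ xPowIdeal R L n) :
    p = 0 := by
  let c := TensorProduct.equivFinsuppOfBasisLeft (basisMonomials R) (N := L)
  have hc : ∀ n (q : R[X] ⊗[R] L), ∀ d < n, c ((X ^ n : R[X]) • q) d = 0 := by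
    intro n q d hd
    induction q using TensorProduct.induction_on with
    | zero => simp
    | tmul r m =>
      rw [TensorProduct.smul_tmul', smul_eq_mul,
        TensorProduct.equivFinsuppOfBasisLeft_apply_tmul_apply]
      change (X ^ n * r).coeff d • m = 0
      rw [coeff_X_pow_mul', if_neg (not_le.2 hd), zero_smul]
    | add q₁ q₂ h₁ h₂ => simp_all [smul_add]
  apply c.injective
  ext d
  obtain ⟨q, hq⟩ := hp (d + 1)
  simpa [← hq] using hc (d + 1) q d d.lt_succ_self

end LieAlgebra.ExtendScalars

namespace FreeLieAlgebra

open LieAlgebra.ExtendScalars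

variable {R : Type*} [CommRing R] {Y : Type*}

theorem lieSpan_range_of :
    LieSubalgebra.lieSpan R (FreeLieAlgebra R Y) (Set.range (of R : Y → _)) = ⊤ := by
  set S := LieSubalgebra.lieSpan R (FreeLieAlgebra R Y) (Set.range (of R : Y → _))
  let g : FreeLieAlgebra R Y →ₗ⁅R⁆ S :=
    lift R fun y => ⟨of R y, LieSubalgebra.subset_lieSpan ⟨y, rfl⟩⟩
  have hg : S.incl.comp g = LieHom.id := hom_ext fun y => by simp [g]
  refine eq_top_iff.2 fun m _ => ?_
  have hm : S.incl (g m) = m := DFunLike.congr_fun hg m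
  exact hm ▸ (g m).2

theorem range_lift {L : Type*} [LieRing L] [LieAlgebra R L] (f : Y → L) :
    (lift R f).range = LieSubalgebra.lieSpan R L (Set.range f) := by
  rw [LieHom.range_eq_map, ← lieSpan_range_of, LieSubalgebra.map_lieSpan, ← Set.range_comp,
    of_comp_lift]

variable (R Y) in
def lengthCoaction : FreeLieAlgebra R Y →ₗ⁅R⁆ R[X] ⊗[R] FreeLieAlgebra R Y :=
  lift R fun y => X ⊗ₜ of R y

theorem lengthCoaction_injective : Function.Injective (lengthCoaction R Y) := by
  let evalOne := (lid R (FreeLieAlgebra R Y)).comp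
    (LieAlgebra.ExtendScalars.map (aeval (1 : R)) LieHom.id)
  have h : evalOne.comp (lengthCoaction R Y) = LieHom.id :=
    hom_ext fun y => by simp [evalOne, lengthCoaction]
  exact Function.LeftInverse.injective (g := evalOne) (DFunLike.congr_fun h)

theorem lengthCoaction_mem_xPowIdeal_one (m : FreeLieAlgebra R Y) :
    lengthCoaction R Y m ∈ xPowIdeal R (FreeLieAlgebra R Y) 1 := by
  have : (⊤ : LieSubalgebra R (FreeLieAlgebra R Y)) ≤
      ((xPowIdeal R (FreeLieAlgebra R Y) 1).comap (lengthCoaction R Y)).toLieSubalgebra := by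
    rw [← lieSpan_range_of, LieSubalgebra.lieSpan_le]
    rintro _ ⟨y, rfl⟩
    exact ⟨1 ⊗ₜ of R y, by simp [lengthCoaction, TensorProduct.smul_tmul']⟩
  exact this trivial

theorem lengthCoaction_mem_xPowIdeal {n : ℕ} {m : FreeLieAlgebra R Y}
    (hm : m ∈ lowerCentralSeries R (FreeLieAlgebra R Y) (FreeLieAlgebra R Y) n) :
    lengthCoaction R Y m ∈ xPowIdeal R (FreeLieAlgebra R Y) n := by
  induction n generalizing m with
  | zero => exact ⟨lengthCoaction R Y m, by simp⟩
  | succ n ih =>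
    rw [LieModule.lowerCentralSeries_succ] at hm
    suffices h : ⁅(⊤ : LieIdeal R (FreeLieAlgebra R Y)), lowerCentralSeries R _ _ n⁆ ≤
        (xPowIdeal R (FreeLieAlgebra R Y) (n + 1)).comap (lengthCoaction R Y) from h hm
    rw [LieSubmodule.lie_le_iff]
    intro a _ b hb
    rw [LieIdeal.mem_comap, LieHom.map_lie, add_comm]
    exact lie_mem_xPowIdeal (lengthCoaction_mem_xPowIdeal_one a) (ih hb)

theorem eq_zero_of_forall_mem_lowerCentralSeries {m : FreeLieAlgebra R Y}
    (hm : ∀ n, m ∈ lowerCentralSeries R (FreeLieAlgebra R Y) (FreeLieAlgebra R Y) n) : m = 0 :=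
  lengthCoaction_injective <| by
    rw [map_zero]
    exact eq_zero_of_forall_mem_xPowIdeal fun n => lengthCoaction_mem_xPowIdeal (hm n)

theorem span_range_of_sup_lowerCentralSeries_one :
    Submodule.span R (Set.range (of R : Y → _)) ⊔
      (lowerCentralSeries R (FreeLieAlgebra R Y) (FreeLieAlgebra R Y) 1).toSubmodule = ⊤ := by
  set D := (lowerCentralSeries R (FreeLieAlgebra R Y) (FreeLieAlgebra R Y) 1).toSubmodule
  let S : LieSubalgebra R (FreeLieAlgebra R Y) :=
    { toSubmodule := Submodule.span R (Set.range (of R)) ⊔ D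
      lie_mem' := fun {a b} _ _ => Submodule.mem_sup_right
        (lie_mem_lowerCentralSeries_succ a (LieSubmodule.mem_top b)) }
  have h : LieSubalgebra.lieSpan R _ (Set.range (of R : Y → _)) ≤ S :=
    LieSubalgebra.lieSpan_le.2 fun x hx => Submodule.mem_sup_left (Submodule.subset_span hx)
  rw [lieSpan_range_of] at h
  exact eq_top_iff.2 fun x _ => h trivial

theorem mem_lowerCentralSeries_one_of_lift_mem {L : Type*} [LieRing L] [LieAlgebra R L]
    {f : Y → L}
    (hf : LinearIndependent R fun y => (lowerCentralSeries R L L 1).toSubmodule.mkQ (f y))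
    {m : FreeLieAlgebra R Y} (hm : lift R f m ∈ lowerCentralSeries R L L 1) :
    m ∈ lowerCentralSeries R (FreeLieAlgebra R Y) (FreeLieAlgebra R Y) 1 := by
  have hm' : m ∈ Submodule.span R (Set.range (of R : Y → _)) ⊔
      (lowerCentralSeries R (FreeLieAlgebra R Y) (FreeLieAlgebra R Y) 1).toSubmodule := by
    rw [span_range_of_sup_lowerCentralSeries_one]; trivial
  obtain ⟨u, hu, v, hv, rfl⟩ := Submodule.mem_sup.1 hm'
  obtain ⟨c, rfl⟩ := Finsupp.mem_span_range_iff_exists_finsupp.1 hu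
  have hv' : lift R f v ∈ lowerCentralSeries R L L 1 :=
    LieIdeal.map_lowerCentralSeries_le 1 (LieIdeal.mem_map hv)
  have hu' := sub_mem hm hv'
  rw [map_add, add_sub_cancel_right] at hu'
  have hc : c = 0 := by
    refine linearIndependent_iff.1 hf c ?_
    rw [← (Submodule.Quotient.mk_eq_zero _).2 hu', ← Submodule.mkQ_apply, map_finsuppSum,
      map_finsuppSum]
    simp [Finsupp.linearCombination_apply]
  simpa [hc] using hv

theorem exists_rightInverse_of_bijective_lift {F L M : Type*} [LieRing L] [LieAlgebra R L]
    [LieRing M] [LieAlgebra R M] {f : F → L} (hf : Function.Bijective (lift R f))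
    (φ : M →ₗ⁅R⁆ L) (hφ : Function.Surjective φ) : ∃ ψ : L →ₗ⁅R⁆ M, ∀ l, φ (ψ l) = l := by
  choose s hs using fun y => hφ (f y)
  let e := LieEquiv.ofBijective (lift R f) hf
  have h : φ.comp (lift R s) = lift R f := hom_ext fun y => by simp [hs]
  exact ⟨(lift R s).comp e.symm.toLieHom, fun l =>
    (DFunLike.congr_fun h (e.symm l)).trans (e.apply_symm_apply l)⟩

end FreeLieAlgebra

section GradedProj

variable {R M : Type*} [CommRing R] [AddCommGroup M] [Module R M]
  (G : ℕ → Submodule R M) [DirectSum.Decomposition G]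

def gradedProj (d : ℕ) : M →ₗ[R] M :=
  (G d).subtype ∘ₗ DirectSum.component R ℕ (fun i => G i) d ∘ₗ
    (DirectSum.decomposeLinearEquiv G).toLinearMap

theorem gradedProj_of_mem {d e : ℕ} {m : M} (hm : m ∈ G e) :
    gradedProj G d m = if e = d then m else 0 := by
  split_ifs with h
  · subst h; exact DirectSum.decompose_of_mem_same G hm
  · exact DirectSum.decompose_of_mem_ne G hm h

end GradedProj

namespace LieAlgebra

variable {R L : Type*} [CommRing R] [LieRing L] [LieAlgebra R L]
  {G : ℕ → Submodule R L} [DirectSum.Decomposition G]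

theorem gradedProj_lie_mem
    (hbracket : ∀ i j (x y : L), x ∈ G i → y ∈ G j → ⁅x, y⁆ ∈ G (i + j))
    (hG0 : G 0 = ⊥) {S : LieSubalgebra R L} {d : ℕ} (hS : ∀ i < d, ∀ x ∈ G i, x ∈ S)
    (a b : L) : gradedProj G d ⁅a, b⁆ ∈ S := by
  have hzero : ∀ x ∈ G 0, x = 0 := fun x hx => by rwa [hG0, Submodule.mem_bot] at hx
  induction a using DirectSum.Decomposition.inductionOn G with
  | zero => simp
  | add a₁ a₂ h₁ h₂ => rw [add_lie, map_add]; exact add_mem h₁ h₂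
  | @homogeneous i a =>
    induction b using DirectSum.Decomposition.inductionOn G with
    | zero => simp
    | add b₁ b₂ h₁ h₂ => rw [lie_add, map_add]; exact add_mem h₁ h₂
    | @homogeneous j b =>
      rw [gradedProj_of_mem G (hbracket i j a b a.2 b.2)]
      split_ifs with hij
      · rcases Nat.eq_zero_or_pos i with rfl | hi
        · simp [hzero a a.2]
        rcases Nat.eq_zero_or_pos j with rfl | hj
        · simp [hzero b b.2]
        exact S.lie_mem (hS i (by omega) a a.2) (hS j (by omega) b b.2)
      · exact S.zero_mem

theorem lieSpan_eq_top_of_sup_span_eq_top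
    (hbracket : ∀ i j (x y : L), x ∈ G i → y ∈ G j → ⁅x, y⁆ ∈ G (i + j))
    (hG0 : G 0 = ⊥) {X : Set L} (hXhom : ∀ x ∈ X, ∃ d, x ∈ G d)
    (hX : (lowerCentralSeries R L L 1).toSubmodule ⊔ Submodule.span R X = ⊤) :
    LieSubalgebra.lieSpan R L X = ⊤ := by
  set S := LieSubalgebra.lieSpan R L X
  have hG : ∀ d, ∀ l ∈ G d, l ∈ S := by
    intro d
    induction d using Nat.strong_induction_on with
    | _ d ih =>
      intro l hl
      have hle : (⊤ : Submodule R L) ≤ S.toSubmodule.comap (gradedProj G d) := by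
        rw [← hX, coe_lowerCentralSeries_one]
        refine sup_le (Submodule.span_le.2 ?_) (Submodule.span_le.2 fun x hx => ?_)
        · rintro _ ⟨a, b, rfl⟩
          exact gradedProj_lie_mem hbracket hG0 ih a b
        · obtain ⟨e, he⟩ := hXhom x hx
          change gradedProj G d x ∈ S
          rw [gradedProj_of_mem G he]
          split_ifs
          exacts [LieSubalgebra.subset_lieSpan hx, S.zero_mem]
      simpa [gradedProj_of_mem G hl] using hle (Submodule.mem_top (x := l))
  refine eq_top_iff.2 fun l _ => ?_
  classical
  rw [← DirectSum.sum_support_decompose G l]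
  exact sum_mem fun d _ => hG d _ (DirectSum.decompose G l d).2

end LieAlgebra

end

theorem stmt7_general (k : Type*) [Field k]
    (L : Type*) [LieRing L] [LieAlgebra k L]
    (G : ℕ → Submodule k L) (hdec : DirectSum.Decomposition G)
    (hbracket : ∀ (i j : ℕ) (x y : L), x ∈ G i → y ∈ G j → ⁅x, y⁆ ∈ G (i + j))
    (hG0 : G 0 = ⊥)
    (F : Set L)
    (hFfree : Function.Bijective (FreeLieAlgebra.lift k (fun x : F => (x : L))))
    (D : Submodule k L) (hD : D = Submodule.span k {z : L | ∃ a b : L, ⁅a, b⁆ = z})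
    (X : Set L)
    (hXhom : ∀ x ∈ X, ∃ d ≥ 1, x ∈ G d)
    (hXind : LinearIndependent k fun x : X => D.mkQ (x : L))
    (hXspan : Submodule.span k (D.mkQ '' X) = ⊤) :
    Function.Bijective (FreeLieAlgebra.lift k (fun x : X => (x : L))) := by
  rw [← LieAlgebra.coe_lowerCentralSeries_one] at hD
  subst hD
  rw [← Submodule.map_span, Submodule.map_mkQ_eq_top] at hXspan
  set φ := FreeLieAlgebra.lift k fun x : X => (x : L)
  have hsurj : Function.Surjective φ := by
    rw [← LieHom.range_eq_top, FreeLieAlgebra.range_lift, Subtype.range_coe]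
    exact LieAlgebra.lieSpan_eq_top_of_sup_span_eq_top hbracket hG0
      (fun x hx => (hXhom x hx).imp fun _ h => h.2) hXspan
  obtain ⟨ψ, hψ⟩ := FreeLieAlgebra.exists_rightInverse_of_bijective_lift hFfree φ hsurj
  have hψφ : ∀ m, ψ (φ m) - m ∈ LieModule.lowerCentralSeries k _ _ 1 := fun m =>
    FreeLieAlgebra.mem_lowerCentralSeries_one_of_lift_mem hXind <| by
      change φ (ψ (φ m) - m) ∈ _
      rw [map_sub, hψ, sub_self]
      exact zero_mem _
  refine ⟨Function.Injective.of_comp (f := ψ) ?_, hsurj⟩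
  exact LieAlgebra.injective_of_sub_mem_lowerCentralSeries_one
    (fun _ => FreeLieAlgebra.eq_zero_of_forall_mem_lowerCentralSeries) (ψ.comp φ) hψφ

/-- Let `L` be a Lie algebra over a field `k` of characteristic `0`,
graded by positive degrees (`G d`, with `G 0 = ⊥`, a vector-space decomposition
compatible with the bracket), and freely generated by a set `F` of homogeneous
elements of positive degree (i.e. the canonical map `FreeLieAlgebra k F → L` is
bijective).  Then any set `X` of homogeneous elements whose images form a basis of
the abelianization `L/[L,L]` freely generates `L`. -/
theorem stmt7 (k : Type*) [Field k] [CharZero k]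
    (L : Type*) [LieRing L] [LieAlgebra k L]
    (G : ℕ → Submodule k L) (hdec : DirectSum.Decomposition G)
    (hbracket : ∀ (i j : ℕ) (x y : L), x ∈ G i → y ∈ G j → ⁅x, y⁆ ∈ G (i + j))
    (hG0 : G 0 = ⊥)
    (F : Set L)
    (hFhom : ∀ x ∈ F, ∃ d ≥ 1, x ∈ G d)
    (hFfree : Function.Bijective (FreeLieAlgebra.lift k (fun x : F => (x : L))))
    (D : Submodule k L) (hD : D = Submodule.span k {z : L | ∃ a b : L, ⁅a, b⁆ = z})
    (X : Set L)
    (hXhom : ∀ x ∈ X, ∃ d ≥ 1, x ∈ G d)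
    (hXind : LinearIndependent k fun x : X => D.mkQ (x : L))
    (hXspan : Submodule.span k (D.mkQ '' X) = ⊤) :
    Function.Bijective (FreeLieAlgebra.lift k (fun x : X => (x : L))) :=
  stmt7_general k L G hdec hbracket hG0 F hFfree D hD X hXhom hXind hXspan
end

section
/- Let L be the free Lie algebra on two generators x, y over a field of characteristic 0, graded with x, y in degree 1. Any nonzero element of the Lie subalgebra generated by x' = x + [x,[x,y]] and y' = y + [x,[x,[x,y]]] has a nonzero homogeneous component in some degree ≥ 3, or is a linear combination of x' and y'. -/
/-!
Represent `k⟨x, y⟩` on `k⁵` by `x ↦ P`, `y ↦ Q` for integer matrices with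
`Q + [P, [P, [P, Q]]] = 0`. This representation kills `y'` and sends `x'` to `P + [P, [P, Q]]`,
so it maps the Lie algebra generated by `x'` and `y'` into a line, on which the bracket vanishes.
In characteristic zero the images of `1, x, y, x², xy, yx, y²` together with `P + [P, [P, Q]]`
are linearly independent, so the only element of degree at most two in that Lie algebra is `0`.
-/

attribute [local instance 100] LieRing.ofAssociativeRing

open Submodule

theorem LieSubalgebra.map_mem_span_singleton_of_mem_lieSpan {R L L' : Type*} [CommRing R]
    [LieRing L] [LieAlgebra R L] [LieRing L'] [LieAlgebra R L'] (f : L →ₗ⁅R⁆ L') {s : Set L}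
    {w : L'} (hs : ∀ u ∈ s, f u ∈ R ∙ w) {a : L} (ha : a ∈ lieSpan R L s) : f a ∈ R ∙ w := by
  induction ha using lieSpan_induction with
  | mem u hu => exact hs u hu
  | zero => simp
  | add u v _ _ hu hv => simpa using add_mem hu hv
  | smul r u _ hu => simpa using smul_mem _ r hu
  | lie u v _ _ hu hv =>
    obtain ⟨r, hr⟩ := mem_span_singleton.mp hu
    obtain ⟨t, ht⟩ := mem_span_singleton.mp hv
    simp [← hr, ← ht]

theorem Submodule.pow_zero_sup_pow_one_sup_pow_two_span_pair {R A : Type*} [CommSemiring R]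
    [Semiring A] [Algebra R A] (u v : A) :
    span R {u, v} ^ 0 ⊔ span R {u, v} ^ 1 ⊔ span R {u, v} ^ 2 =
      span R (Set.range ![1, u, v, u * u, u * v, v * u, v * v]) := by
  rw [pow_zero, pow_one, pow_two, one_eq_span, span_mul_span, ← span_union, ← span_union]
  congr 1
  ext z
  simp [Set.mem_mul]
  aesop

theorem LinearIndependent.eq_zero_of_mem_span_of_map_mem_span_singleton {R V W : Type*} [Ring R]
    [AddCommGroup V] [Module R V] [AddCommGroup W] [Module R W] {n : ℕ} {f : V →ₗ[R] W}
    {b : Fin n → V} {w : W} (hli : LinearIndependent R (Fin.cons w (f ∘ b) : Fin (n + 1) → W))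
    {a : V} (ha : a ∈ span R (Set.range b)) (hfa : f a ∈ R ∙ w) : a = 0 := by
  obtain ⟨c, rfl⟩ := (mem_span_range_iff_exists_fun R).mp ha
  obtain ⟨d, hd⟩ := mem_span_singleton.mp hfa
  have hc := Fintype.linearIndependent_iff.mp hli (Fin.cons (-d) c)
    (by simp [Fin.sum_univ_succ, hd])
  have hc0 : c = 0 := funext fun i => by simpa using hc i.succ
  simp [hc0]

namespace FiveDimRep

def P : Matrix (Fin 5) (Fin 5) ℤ :=
  !![0, 0, 0, 0, 0; 0, 1, 0, 0, 0; 0, 0, 2, 0, 0; 0, 0, 0, 0, -1; 0, 0, 0, 1, 1]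

def Q : Matrix (Fin 5) (Fin 5) ℤ :=
  !![0, 3, 0, 0, 0; 0, 0, 0, 3, 0; 0, 0, 0, 0, 0; -3, 0, 0, 0, 0; -1, 0, 0, 0, 0]

/- `P` has eigenvalues `0, 1, 2, ω, ω̄` with `ω` a primitive sixth root of unity, and `Q` lies in
the eigenspaces of `ad P` for `-1, ω, ω̄`, whose cubes are all `-1`. -/
theorem Q_add_lie_P_lie_P_lie_P : Q + ⁅P, ⁅P, ⁅P, Q⁆⁆⁆ = 0 := by
  simp only [Ring.lie_def]
  decide

variable (k : Type*) [Field k]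

def ofInt : Matrix (Fin 5) (Fin 5) ℤ →+* Matrix (Fin 5) (Fin 5) k :=
  (Int.castRingHom k).mapMatrix

def toMatrix : FreeAlgebra k (Fin 2) →ₐ[k] Matrix (Fin 5) (Fin 5) k :=
  FreeAlgebra.lift k ![ofInt k P, ofInt k Q]

local notation "x" => FreeAlgebra.ι k (0 : Fin 2)
local notation "y" => FreeAlgebra.ι k (1 : Fin 2)

theorem toMatrix_x_add_lie_lie : toMatrix k (x + ⁅x, ⁅x, y⁆⁆) = ofInt k (P + ⁅P, ⁅P, Q⁆⁆) := by
  simp [toMatrix, Ring.lie_def]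

theorem toMatrix_y_add_lie_lie_lie : toMatrix k (y + ⁅x, ⁅x, ⁅x, y⁆⁆⁆) = 0 := by
  simpa [toMatrix, Ring.lie_def] using congrArg (ofInt k) Q_add_lie_P_lie_P_lie_P

theorem linearIndependent_cons_toMatrix_comp [CharZero k] : LinearIndependent k
    (Fin.cons (ofInt k (P + ⁅P, ⁅P, Q⁆⁆)) (toMatrix k ∘ ![1, x, y, x * x, x * y, y * x, y * y]) :
      Fin 8 → Matrix (Fin 5) (Fin 5) k) := by
  have himages : (Fin.cons (ofInt k (P + ⁅P, ⁅P, Q⁆⁆))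
      (toMatrix k ∘ ![1, x, y, x * x, x * y, y * x, y * y]) : Fin 8 → Matrix (Fin 5) (Fin 5) k) =
      ofInt k ∘ ![P + ⁅P, ⁅P, Q⁆⁆, 1, P, Q, P * P, P * Q, Q * P, Q * Q] := by
    ext i : 1
    refine Fin.cases rfl (fun i => ?_) i
    rw [Fin.cons_succ]
    fin_cases i <;> simp [toMatrix]
  rw [himages, Fintype.linearIndependent_iff]
  intro g hg
  have entry (r c : Fin 5) := congrFun (congrFun hg r) c
  simp only [Matrix.sum_apply, Function.comp_apply, Matrix.smul_apply, ofInt,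
    RingHom.mapMatrix_apply, Matrix.map_apply, smul_eq_mul, Matrix.zero_apply] at entry
  have e00 := entry 0 0
  have e01 := entry 0 1
  have e03 := entry 0 3
  have e11 := entry 1 1
  have e13 := entry 1 3
  have e14 := entry 1 4
  have e30 := entry 3 0
  have e33 := entry 3 3
  simp [Fin.sum_univ_succ, P, Q, Ring.lie_def] at e00 e01 e03 e11 e13 e14 e30 e33
  have h0 : g 0 = 0 := by linear_combination (3 * e30 - e13 + 4 * e01 + 4 * e14) / 36
  have h4 : g 4 = 0 := by linear_combination e00 - e33
  have h2 : g 2 = 0 := by linear_combination e11 - h0 - e00 - h4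
  have h6 : g 6 = 0 := by linear_combination h0 - e14 / 3
  have h3 : g 3 = 0 := by linear_combination e01 / 3 - h0 - h6
  have h5 : g 5 = 0 := by linear_combination e13 / 3 - h3
  intro i
  fin_cases i <;> assumption

end FiveDimRep

/-- Work in the free Lie algebra on two generators `x, y`, realized as
the Lie elements of the free associative algebra `k⟨x,y⟩` graded by total degree
(`M ^ d` is the degree-`d` component, `M` the span of the generators).  Any nonzero
element of the Lie subalgebra generated by `x' = x + [x,[x,y]]` and
`y' = y + [x,[x,[x,y]]]` either has a nonzero homogeneous component in some degree
`≥ 3` (i.e. does not lie in `M⁰ ⊔ M¹ ⊔ M²`), or is a linear combination of `x'` and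
`y'`. -/
theorem stmt9 (k : Type*) [Field k] [CharZero k]
    (M : Submodule k (FreeAlgebra k (Fin 2)))
    (hM : M = Submodule.span k (Set.range (FreeAlgebra.ι k (X := Fin 2))))
    (x y : FreeAlgebra k (Fin 2))
    (hx : x = FreeAlgebra.ι k (0 : Fin 2)) (hy : y = FreeAlgebra.ι k (1 : Fin 2))
    (x' y' : FreeAlgebra k (Fin 2))
    (hx' : x' = x + ⁅x, ⁅x, y⁆⁆) (hy' : y' = y + ⁅x, ⁅x, ⁅x, y⁆⁆⁆) :
    ∀ a ∈ LieSubalgebra.lieSpan k (FreeAlgebra k (Fin 2)) {x', y'}, a ≠ 0 →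
      a ∉ (M ^ 0 ⊔ M ^ 1 ⊔ M ^ 2) ∨ ∃ c₁ c₂ : k, a = c₁ • x' + c₂ • y' := by
  subst hM hx hy hx' hy'
  intro a ha ha0
  refine .inl fun hlow => ha0 ?_
  have hrange : Set.range (FreeAlgebra.ι k (X := Fin 2)) =
      {FreeAlgebra.ι k 0, FreeAlgebra.ι k 1} := by
    ext
    simp [Fin.exists_fin_two, eq_comm]
  rw [hrange, pow_zero_sup_pow_one_sup_pow_two_span_pair] at hlow
  refine LinearIndependent.eq_zero_of_mem_span_of_map_mem_span_singleton
    (f := (FiveDimRep.toMatrix k).toLinearMap) (FiveDimRep.linearIndependent_cons_toMatrix_comp k)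
    hlow ?_
  refine LieSubalgebra.map_mem_span_singleton_of_mem_lieSpan (FiveDimRep.toMatrix k).toLieHom ?_ ha
  rintro u (rfl | rfl)
  · simp [FiveDimRep.toMatrix_x_add_lie_lie]
  · simp [FiveDimRep.toMatrix_y_add_lie_lie_lie]
end
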